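/- For every integer m ≥ 1, the partition function of the hard square model at activity −1 on the cylinder of circumference 7 satisfies Z(C_{m,7}) = 1. -/
import Mathlib

/-- Adjacency in the cylinder graph: vertices are pairs (row, column) with
rows in {1,…,m} (enforced separately) and columns in ℤ/nℤ.  Two distinct
vertices are adjacent iff they are in the same row and their columns differ
by ±1 in ℤ/nℤ, or they are in the same column and their rows differ by 1. -/
def cylAdj (n : ℕ) (v w : ℕ × ZMod n) : Prop :=
  v ≠ w ∧ ((v.1 = w.1 ∧ (w.2 = v.2 + 1 ∨ v.2 = w.2 + 1)) ∨
    (v.2 = w.2 ∧ (v.1 + 1 = w.1 ∨ w.1 + 1 = v.1)))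

/-- `σ` is an independent set of the cylinder graph `C_{m,n}`:
its vertices lie in {1,…,m} × ℤ/nℤ and no two of them are adjacent. -/
def cylIndep (m n : ℕ) (σ : Finset (ℕ × ZMod n)) : Prop :=
  (∀ v ∈ σ, 1 ≤ v.1 ∧ v.1 ≤ m) ∧ ∀ v ∈ σ, ∀ w ∈ σ, ¬ cylAdj n v w

/-- Partition function of the hard square model at activity −1 on `C_{m,n}`:
`Z(C_{m,n}) = Σ_σ (−1)^{|σ|}` over all independent sets `σ`. -/
noncomputable def Zcyl (m n : ℕ) : ℤ :=
  ∑ᶠ σ ∈ {σ : Finset (ℕ × ZMod n) | cylIndep m n σ}, (-1 : ℤ) ^ σ.card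

/- ### Auxiliary machinery -/

instance (n : ℕ) (v w : ℕ × ZMod n) : Decidable (cylAdj n v w) := by
  unfold cylAdj; infer_instance

instance (m n : ℕ) (σ : Finset (ℕ × ZMod n)) : Decidable (cylIndep m n σ) := by
  unfold cylIndep; infer_instance

/-- bounding box of the cylinder -/
def cylBox (m : ℕ) : Finset (ℕ × ZMod 7) := Finset.Icc 1 m ×ˢ Finset.univ

/-- the finset of all independent sets of `C_{m,7}` -/
def cylIndeps (m : ℕ) : Finset (Finset (ℕ × ZMod 7)) :=
  (cylBox m).powerset.filter (fun σ => cylIndep m 7 σ)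

/-- columns occupied in row `k` -/
def cylSlice (k : ℕ) (σ : Finset (ℕ × ZMod 7)) : Finset (ZMod 7) :=
  (σ.filter (fun v => v.1 = k)).image Prod.snd

/-- `S` is an independent set of the cycle of length 7 -/
def rowOK (S : Finset (ZMod 7)) : Prop := ∀ j ∈ S, j + 1 ∉ S

instance : DecidablePred rowOK := fun S => by unfold rowOK; infer_instance

/-- transfer operation -/
def stepFun (f : Finset (ZMod 7) → ℤ) (S : Finset (ZMod 7)) : ℤ :=
  if rowOK S then (-1 : ℤ) ^ S.card *
    ∑ T ∈ Finset.univ.filter (fun T => Disjoint T S), f T else 0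

/-- signed count of independent sets of `C_{m,7}` with prescribed top row -/
def gv : ℕ → Finset (ZMod 7) → ℤ
  | 0 => fun S => if S = ∅ then 1 else 0
  | m + 1 => stepFun (gv m)

lemma mem_cylSlice {k : ℕ} {σ : Finset (ℕ × ZMod 7)} {j : ZMod 7} :
    j ∈ cylSlice k σ ↔ (k, j) ∈ σ := by
  simp only [cylSlice, Finset.mem_image, Finset.mem_filter]
  constructor
  · rintro ⟨⟨a, b⟩, ⟨hv, h1⟩, h2⟩
    cases h1; cases h2; exact hv
  · intro h; exact ⟨(k, j), ⟨h, rfl⟩, rfl⟩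

lemma mem_cylIndeps {m : ℕ} {σ : Finset (ℕ × ZMod 7)} :
    σ ∈ cylIndeps m ↔ cylIndep m 7 σ := by
  simp only [cylIndeps, Finset.mem_filter, Finset.mem_powerset, and_iff_right_iff_imp]
  intro h v hv
  simp only [cylBox, Finset.mem_product, Finset.mem_Icc, Finset.mem_univ, and_true]
  exact h.1 v hv

lemma cylAdj_symm {n : ℕ} {v w : ℕ × ZMod n} (h : cylAdj n v w) : cylAdj n w v := by
  obtain ⟨hne, h⟩ := h
  refine ⟨hne.symm, ?_⟩
  rcases h with ⟨h1, h2⟩ | ⟨h1, h2⟩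
  · exact Or.inl ⟨h1.symm, h2.symm⟩
  · exact Or.inr ⟨h1.symm, h2.symm⟩

/-- The key slicing recursion. -/
lemma slice_rec : ∀ m S,
    ∑ σ ∈ (cylIndeps m).filter (fun σ => cylSlice m σ = S), (-1 : ℤ) ^ σ.card = gv m S := by
  intro m
  induction m with
  | zero =>
    intro S
    have hbox : cylBox 0 = ∅ := by
      simp [cylBox]
    have hind : cylIndeps 0 = {∅} := by
      rw [cylIndeps, hbox]
      decide
    have hslice : cylSlice 0 (∅ : Finset (ℕ × ZMod 7)) = ∅ := by decide
    rw [hind]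
    by_cases hS : S = ∅
    · subst hS
      rw [Finset.filter_true_of_mem (by simpa using hslice)]
      simp [gv]
    · rw [Finset.filter_false_of_mem, gv]
      · simp [hS]
      · intro x hx
        simp only [Finset.mem_singleton] at hx
        subst hx; rw [hslice]; exact fun h => hS h.symm
  | succ m IH =>
    intro S
    by_cases hS : rowOK S
    · -- main case
      have grhs : gv (m + 1) S = (-1 : ℤ) ^ S.card *
          ∑ T ∈ Finset.univ.filter (fun T => Disjoint T S), gv m T := by
        rw [show gv (m+1) = stepFun (gv m) from rfl, stepFun, if_pos hS]
      rw [grhs]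
      have hrw : ∑ T ∈ Finset.univ.filter (fun T => Disjoint T S), gv m T
          = ∑ T ∈ Finset.univ.filter (fun T => Disjoint T S),
              ∑ σ ∈ (cylIndeps m).filter (fun σ => cylSlice m σ = T), (-1 : ℤ) ^ σ.card :=
        Finset.sum_congr rfl fun T _ => (IH T).symm
      rw [hrw]
      rw [Finset.sum_fiberwise_eq_sum_filter (cylIndeps m)
        (Finset.univ.filter (fun T => Disjoint T S)) (cylSlice m) (fun σ => (-1 : ℤ) ^ σ.card)]
      rw [Finset.mul_sum]
      simp only [Finset.mem_filter, Finset.mem_univ, true_and]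
      -- now a bijection
      refine (Finset.sum_nbij'
        (i := fun σ => σ ∪ S.image (fun j => ((m+1 : ℕ), j)))
        (j := fun σ' => σ'.filter (fun v => v.1 ≤ m))
        ?_ ?_ ?_ ?_ ?_).symm
      · -- maps A to B
        intro σ hσ
        rw [Finset.mem_filter] at hσ ⊢
        obtain ⟨hσ, hdisj⟩ := hσ
        rw [mem_cylIndeps] at hσ
        have hrow : ∀ v ∈ σ, 1 ≤ v.1 ∧ v.1 ≤ m := hσ.1
        have htopmem : ∀ v : ℕ × ZMod 7,
            v ∈ S.image (fun j => ((m+1 : ℕ), j)) ↔ v.1 = m + 1 ∧ v.2 ∈ S := by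
          rintro ⟨a, b⟩
          simp only [Finset.mem_image, Prod.mk.injEq]
          constructor
          · rintro ⟨j, hj, h1, h2⟩; cases h1; cases h2; exact ⟨rfl, hj⟩
          · rintro ⟨h1, h2⟩; exact ⟨b, h2, h1.symm, rfl⟩
        constructor
        · rw [mem_cylIndeps]
          constructor
          · intro v hv
            rcases Finset.mem_union.1 hv with hv | hv
            · exact ⟨(hrow v hv).1, (hrow v hv).2.trans (Nat.le_succ m)⟩
            · rw [htopmem] at hv; omega
          · -- independence
            have key : ∀ v ∈ σ, ∀ w ∈ S.image (fun j => ((m+1 : ℕ), j)), ¬ cylAdj 7 v w := by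
              intro v hv w hw hadj
              rw [htopmem] at hw
              obtain ⟨hw1, hw2⟩ := hw
              have hvm := (hrow v hv).2
              rcases hadj.2 with ⟨h1, _⟩ | ⟨h1, h2⟩
              · omega
              · rcases h2 with h2 | h2
                · have hvm' : v.1 = m := by omega
                  have hmem : v.2 ∈ cylSlice m σ := by
                    rw [mem_cylSlice]
                    have : v = (m, v.2) := by
                      rw [Prod.ext_iff]; exact ⟨hvm', rfl⟩
                    rwa [← this]
                  rw [h1] at hmem
                  exact Finset.disjoint_left.1 hdisj hmem hw2
                · omega
            intro v hv w hw hadj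
            rcases Finset.mem_union.1 hv with hv' | hv' <;>
              rcases Finset.mem_union.1 hw with hw' | hw'
            · exact hσ.2 v hv' w hw' hadj
            · exact key v hv' w hw' hadj
            · exact key w hw' v hv' (cylAdj_symm hadj)
            · -- both in top row
              rw [htopmem] at hv' hw'
              rcases hadj.2 with ⟨_, h2⟩ | ⟨h1, h2⟩
              · rcases h2 with h2 | h2
                · exact hS v.2 hv'.2 (by rw [← h2]; exact hw'.2)
                · exact hS w.2 hw'.2 (by rw [← h2]; exact hv'.2)
              · omega
        · -- slice equals S
          ext j
          rw [mem_cylSlice, Finset.mem_union, htopmem]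
          simp only [true_and]
          constructor
          · rintro (h | h)
            · exact absurd (hrow _ h).2 (by omega)
            · exact h
          · intro h; exact Or.inr h
      · -- maps B to A
        intro σ' hσ'
        rw [Finset.mem_filter] at hσ' ⊢
        obtain ⟨hσ', hsl⟩ := hσ'
        rw [mem_cylIndeps] at hσ'
        refine ⟨mem_cylIndeps.2 ⟨?_, ?_⟩, ?_⟩
        · intro v hv
          rw [Finset.mem_filter] at hv
          exact ⟨(hσ'.1 v hv.1).1, hv.2⟩
        · intro v hv w hw
          rw [Finset.mem_filter] at hv hw
          exact hσ'.2 v hv.1 w hw.1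
        · -- disjointness of slice with S
          rw [Finset.disjoint_left]
          intro j hj hjS
          rw [mem_cylSlice, Finset.mem_filter] at hj
          rw [← hsl, mem_cylSlice] at hjS
          exact hσ'.2 _ hj.1 _ hjS ⟨by simp, Or.inr ⟨rfl, Or.inl rfl⟩⟩
      · -- left inverse : union then filter gives back σ
        intro σ hσ
        rw [Finset.mem_filter] at hσ
        obtain ⟨hσ, _⟩ := hσ
        rw [mem_cylIndeps] at hσ
        ext v
        rw [Finset.mem_filter, Finset.mem_union, Finset.mem_image]
        constructor
        · rintro ⟨h | ⟨j, _, hje⟩, hle⟩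
          · exact h
          · rw [← hje] at hle; simp at hle
        · intro hv
          exact ⟨Or.inl hv, (hσ.1 v hv).2⟩
      · -- right inverse : filter then union gives back σ'
        intro σ' hσ'
        rw [Finset.mem_filter] at hσ'
        obtain ⟨hσ', hsl⟩ := hσ'
        rw [mem_cylIndeps] at hσ'
        ext v
        rw [Finset.mem_union, Finset.mem_filter, Finset.mem_image]
        constructor
        · rintro (⟨h, _⟩ | ⟨j, hj, hje⟩)
          · exact h
          · rw [← hsl, mem_cylSlice] at hj
            rw [← hje]; exact hj
        · intro hv
          have := hσ'.1 v hv
          by_cases hle : v.1 ≤ m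
          · exact Or.inl ⟨hv, hle⟩
          · have hv1 : v.1 = m + 1 := by omega
            refine Or.inr ⟨v.2, ?_, ?_⟩
            · rw [← hsl, mem_cylSlice]
              have : (m + 1, v.2) = v := by rw [Prod.ext_iff]; exact ⟨hv1.symm, rfl⟩
              rwa [this]
            · rw [Prod.ext_iff]; exact ⟨hv1.symm, rfl⟩
      · -- cardinalities
        intro σ hσ
        rw [Finset.mem_filter] at hσ
        obtain ⟨hσ, _⟩ := hσ
        rw [mem_cylIndeps] at hσ
        have hinj : Function.Injective (fun j : ZMod 7 => ((m+1 : ℕ), j)) := by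
          intro a b h
          simpa using h
        have hdisj2 : Disjoint σ (S.image (fun j => ((m+1 : ℕ), j))) := by
          rw [Finset.disjoint_left]
          rintro v hv hv2
          rw [Finset.mem_image] at hv2
          obtain ⟨j, _, hje⟩ := hv2
          have := (hσ.1 v hv).2
          rw [← hje] at this
          simp at this
        rw [Finset.card_union_of_disjoint hdisj2, Finset.card_image_of_injective _ hinj,
          pow_add, mul_comm]
    · -- row not independent : both sides are 0
      have : (cylIndeps (m+1)).filter (fun σ => cylSlice (m+1) σ = S) = ∅ := by
        rw [Finset.filter_eq_empty_iff]
        intro σ hσ hsl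
        rw [mem_cylIndeps] at hσ
        rw [rowOK] at hS
        push_neg at hS
        obtain ⟨j, hj, hj1⟩ := hS
        rw [← hsl, mem_cylSlice] at hj hj1
        refine hσ.2 _ hj _ hj1 ⟨?_, Or.inl ⟨rfl, Or.inl rfl⟩⟩
        intro h
        rw [Prod.ext_iff] at h
        have : (j : ZMod 7) = j + 1 := h.2
        have : (0 : ZMod 7) = 1 := by
          have := congrArg (fun x => x - j) this
          simpa [sub_eq_iff_eq_add] using this
        exact absurd this (by decide)
      rw [this, Finset.sum_empty]
      rw [show gv (m+1) = stepFun (gv m) from rfl, stepFun, if_neg hS]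

/- ### Numeric transfer-matrix computation via bitmasks -/

/-- the subset of `ZMod 7` encoded by bitmask `k` -/
def maskF (k : ℕ) : Finset (ZMod 7) := Finset.univ.filter (fun j : ZMod 7 => k.testBit j.val)

/-- bitmask encoding of a subset of `ZMod 7` -/
def encS (S : Finset (ZMod 7)) : ℕ := ∑ j ∈ S, 2 ^ j.val

lemma mem_maskF {k : ℕ} {j : ZMod 7} : j ∈ maskF k ↔ k.testBit j.val = true := by
  simp [maskF]

set_option maxRecDepth 40000 in
lemma encS_lt : ∀ S : Finset (ZMod 7), encS S < 128 := by decide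

set_option maxRecDepth 40000 in
lemma mask_encS : ∀ S : Finset (ZMod 7), maskF (encS S) = S := by decide

set_option maxRecDepth 40000 in
lemma encS_mask : ∀ l ∈ Finset.range 128, encS (maskF l) = l := by decide

set_option maxRecDepth 40000 in
lemma maskF_eq_empty : ∀ k ∈ Finset.range 128, (maskF k = ∅ ↔ k = 0) := by decide

lemma disj_bridge {k l : ℕ} (hk : k < 128) (hl : l < 128) :
    Disjoint (maskF k) (maskF l) ↔ k &&& l = 0 := by
  constructor
  · intro h
    refine Nat.eq_of_testBit_eq fun i => ?_
    rw [Nat.testBit_and, Nat.zero_testBit]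
    by_cases hi : i < 7
    · by_cases hb : k.testBit i = true
      · have hj : ((i : ZMod 7)).val = i := ZMod.val_cast_of_lt hi
        have h1 : (i : ZMod 7) ∈ maskF k := mem_maskF.2 (by rwa [hj])
        have h2 : (i : ZMod 7) ∉ maskF l := Finset.disjoint_left.1 h h1
        rw [mem_maskF, hj] at h2
        simp [hb, Bool.eq_false_iff.2 h2]
      · simp [Bool.eq_false_iff.2 hb]
    · have : k < 2 ^ i := lt_of_lt_of_le hk (by
        calc (128 : ℕ) = 2 ^ 7 := by norm_num
        _ ≤ 2 ^ i := Nat.pow_le_pow_right (by norm_num) (by omega))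
      simp [Nat.testBit_lt_two_pow this]
  · intro h
    rw [Finset.disjoint_left]
    intro j hj1 hj2
    rw [mem_maskF] at hj1 hj2
    have : (k &&& l).testBit j.val = true := by
      rw [Nat.testBit_and, hj1, hj2]; rfl
    rw [h, Nat.zero_testBit] at this
    exact Bool.noConfusion this

/-- numeric version of the transfer operation -/
def stepN (v : ℕ → ℤ) (k : ℕ) : ℤ :=
  if rowOK (maskF k) then (-1 : ℤ) ^ (maskF k).card *
    ∑ l ∈ (Finset.range 128).filter (fun l => l &&& k = 0), v l else 0

/-- numeric version of `gv` -/
def gN : ℕ → ℕ → ℤ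
  | 0 => fun k => if k = 0 then 1 else 0
  | m + 1 => stepN (gN m)

lemma stepN_congr {f f' : ℕ → ℤ} (h : ∀ l ∈ Finset.range 128, f l = f' l) (k : ℕ) :
    stepN f k = stepN f' k := by
  rw [stepN, stepN]
  congr 2
  refine Finset.sum_congr rfl fun l hl => h l (Finset.mem_filter.1 hl).1

/-- the transfer recursions agree -/
lemma gv_gN : ∀ m, ∀ k < 128, gv m (maskF k) = gN m k := by
  intro m
  induction m with
  | zero =>
    intro k hk
    show (if maskF k = ∅ then (1:ℤ) else 0) = if k = 0 then 1 else 0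
    rw [if_congr (maskF_eq_empty k (Finset.mem_range.2 hk)) rfl rfl]
  | succ m ih =>
    intro k hk
    show stepFun (gv m) (maskF k) = stepN (gN m) k
    rw [stepFun, stepN]
    by_cases hrk : rowOK (maskF k)
    · rw [if_pos hrk, if_pos hrk]
      congr 1
      refine Finset.sum_nbij' (i := encS) (j := maskF) ?_ ?_ ?_ ?_ ?_
      · intro T hT
        rw [Finset.mem_filter] at hT ⊢
        refine ⟨Finset.mem_range.2 (encS_lt T), ?_⟩
        rw [← disj_bridge (encS_lt T) hk, mask_encS]
        exact hT.2
      · intro l hl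
        rw [Finset.mem_filter] at hl ⊢
        exact ⟨Finset.mem_univ _, (disj_bridge (Finset.mem_range.1 hl.1) hk).2 hl.2⟩
      · intro T _; exact mask_encS T
      · intro l hl; exact encS_mask l (Finset.mem_filter.1 hl).1
      · intro T _
        conv_lhs => rw [← mask_encS T]
        exact ih (encS T) (encS_lt T)
    · rw [if_neg hrk, if_neg hrk]

def v1L : List ℤ := [1,-1,-1,0,-1,1,0,0,-1,1,1,0,0,0,0,0,-1,1,1,0,1,-1,0,0,0,0,0,0,0,0,0,0,-1,1,1,0,1,-1,0,0,1,-1,-1,0,0,0,0,0,0,0,0,0,0,0,0,0,0,0,0,0,0,0,0,0,-1,0,1,0,1,0,0,0,1,0,-1,0,0,0,0,0,1,0,-1,0,-1,0,0,0,0,0,0,0,0,0,0,0,0,0,0,0,0,0,0,0,0,0,0,0,0,0,0,0,0,0,0,0,0,0,0,0,0,0,0,0,0,0,0,0]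
def v2L : List ℤ := [1,-1,-1,0,-1,0,0,0,-1,1,0,0,0,0,0,0,-1,1,1,0,0,0,0,0,0,0,0,0,0,0,0,0,-1,0,1,0,1,0,0,0,0,0,0,0,0,0,0,0,0,0,0,0,0,0,0,0,0,0,0,0,0,0,0,0,-1,0,0,0,1,0,0,0,1,0,0,0,0,0,0,0,0,0,0,0,0,0,0,0,0,0,0,0,0,0,0,0,0,0,0,0,0,0,0,0,0,0,0,0,0,0,0,0,0,0,0,0,0,0,0,0,0,0,0,0,0,0,0,0]
def v3L : List ℤ := [1,0,0,0,0,-1,0,0,0,0,-1,0,0,0,0,0,0,0,0,0,-1,1,0,0,0,0,0,0,0,0,0,0,0,-1,0,0,0,1,0,0,-1,1,1,0,0,0,0,0,0,0,0,0,0,0,0,0,0,0,0,0,0,0,0,0,0,0,-1,0,0,0,0,0,0,0,1,0,0,0,0,0,-1,0,1,0,1,0,0,0,0,0,0,0,0,0,0,0,0,0,0,0,0,0,0,0,0,0,0,0,0,0,0,0,0,0,0,0,0,0,0,0,0,0,0,0,0,0,0,0]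

/-- lookup in an explicit integer list -/
def vN (l : List ℤ) (k : ℕ) : ℤ := l.getD k 0

set_option maxRecDepth 100000 in
lemma n1 : ∀ k ∈ Finset.range 128, gN 1 k = vN v1L k := by decide
set_option maxRecDepth 100000 in
lemma n2 : ∀ k ∈ Finset.range 128, stepN (vN v1L) k = vN v2L k := by decide
set_option maxRecDepth 100000 in
lemma n3 : ∀ k ∈ Finset.range 128, stepN (vN v2L) k = vN v3L k := by decide
set_option maxRecDepth 100000 in
lemma n4 : ∀ k ∈ Finset.range 128, stepN (vN v3L) k = gN 0 k := by decide

lemma gN2 : ∀ k ∈ Finset.range 128, gN 2 k = vN v2L k :=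
  fun k hk => by rw [show gN 2 = stepN (gN 1) from rfl, stepN_congr n1 k]; exact n2 k hk
lemma gN3 : ∀ k ∈ Finset.range 128, gN 3 k = vN v3L k :=
  fun k hk => by rw [show gN 3 = stepN (gN 2) from rfl, stepN_congr gN2 k]; exact n3 k hk
lemma gN4 : ∀ k ∈ Finset.range 128, gN 4 k = gN 0 k :=
  fun k hk => by rw [show gN 4 = stepN (gN 3) from rfl, stepN_congr gN3 k]; exact n4 k hk

lemma gv_four : gv 4 = gv 0 := by
  funext S
  conv_lhs => rw [← mask_encS S]
  conv_rhs => rw [← mask_encS S]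
  rw [gv_gN 4 _ (encS_lt S), gv_gN 0 _ (encS_lt S)]
  exact gN4 _ (Finset.mem_range.2 (encS_lt S))

lemma gv_periodic : ∀ m, gv (m + 4) = gv m := by
  intro m
  induction m with
  | zero => exact gv_four
  | succ k ih =>
    show stepFun (gv (k + 4)) = stepFun (gv k)
    rw [ih]

/-- total signed count -/
def Zg (m : ℕ) : ℤ := ∑ S : Finset (ZMod 7), gv m S

lemma Zg_eq (m : ℕ) : Zg m = ∑ k ∈ Finset.range 128, gN m k := by
  rw [Zg]
  refine Finset.sum_nbij' (i := encS) (j := maskF) ?_ ?_ ?_ ?_ ?_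
  · intro S _; exact Finset.mem_range.2 (encS_lt S)
  · intro l _; exact Finset.mem_univ _
  · intro S _; exact mask_encS S
  · intro l hl; exact encS_mask l hl
  · intro S _
    conv_lhs => rw [← mask_encS S]
    exact gv_gN m _ (encS_lt S)

set_option maxRecDepth 100000 in
lemma Zg1 : Zg 1 = 1 := by
  rw [Zg_eq, Finset.sum_congr rfl n1]; decide
set_option maxRecDepth 100000 in
lemma Zg2 : Zg 2 = 1 := by
  rw [Zg_eq, Finset.sum_congr rfl gN2]; decide
set_option maxRecDepth 100000 in
lemma Zg3 : Zg 3 = 1 := by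
  rw [Zg_eq, Finset.sum_congr rfl gN3]; decide
set_option maxRecDepth 100000 in
lemma Zg0 : Zg 0 = 1 := by
  rw [Zg_eq]; decide
lemma Zg4 : Zg 4 = 1 := by
  rw [Zg_eq, Finset.sum_congr rfl gN4, ← Zg_eq]; exact Zg0

lemma Zg_succ : ∀ m, Zg (m + 1) = 1 := by
  intro m
  induction m using Nat.strong_induction_on with
  | _ m ih =>
    match m with
    | 0 => exact Zg1
    | 1 => exact Zg2
    | 2 => exact Zg3
    | 3 => exact Zg4
    | (k + 4) =>
      have h : Zg (k + 1) = 1 := ih k (by omega)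
      show Zg (k + 1 + 4) = 1
      rw [Zg, gv_periodic (k + 1), ← Zg, h]

lemma Zcyl_eq_Zg (m : ℕ) : Zcyl m 7 = Zg m := by
  have hset : {σ : Finset (ℕ × ZMod 7) | cylIndep m 7 σ} = ↑(cylIndeps m) := by
    ext σ
    simp only [Set.mem_setOf_eq, Finset.coe_filter, Finset.mem_coe, mem_cylIndeps]
  rw [Zcyl, hset, finsum_mem_coe_finset]
  rw [← Finset.sum_fiberwise (cylIndeps m) (cylSlice m) (fun σ => (-1 : ℤ) ^ σ.card)]
  rw [Zg]
  exact Finset.sum_congr rfl fun S _ => slice_rec m S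

/-- For every integer `m ≥ 1`, `Z(C_{m,7}) = 1`. -/
theorem Zcyl_seven (m : ℕ) (hm : 1 ≤ m) : Zcyl m 7 = 1 := by
  obtain ⟨k, rfl⟩ : ∃ k, m = k + 1 := ⟨m - 1, by omega⟩
  rw [Zcyl_eq_Zg]
  exact Zg_succ k
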